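/- arXiv:1106.4255 — 2 statements merged into one kernel-verified Lean document; each statement's English description precedes it below -/
import Mathlib

section
/- Let p be a prime and G ⊆ GL₂(𝔽_p) a subgroup containing the group U = { [[1,b],[0,1]] : b ∈ 𝔽_p } of upper unitriangular matrices, and let V = 𝔽_p² with the natural G-action. If H¹(G,V) ≠ 0, then every g ∈ G that normalizes U (i.e. gUg⁻¹ = U) is upper triangular (its (2,1)-entry is 0) and its diagonal entries satisfy g₁₁ = (g₂₂)². -/
/-- Vanishing of the first group cohomology `H¹(G, V)` of a representation `ρ`, expressed via
inhomogeneous `1`-cocycles: every `1`-cocycle is a `1`-coboundary. -/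
def H1Trivial {k G V : Type*} [CommRing k] [Group G] [AddCommGroup V] [Module k V]
    (ρ : Representation k G V) : Prop :=
  ∀ f : G → V, (∀ g h : G, f (g * h) = f g + ρ g (f h)) →
    ∃ v : V, ∀ g : G, f g = ρ g v - v

/-- The natural representation of a subgroup `G ⊆ GL₂(𝔽_p)` on `V = 𝔽_p²`. -/
noncomputable def glRep (p : ℕ) [Fact p.Prime] (G : Subgroup (GL (Fin 2) (ZMod p))) :
    Representation (ZMod p) G (Fin 2 → ZMod p) where
  toFun g := Matrix.mulVecLin ((g : GL (Fin 2) (ZMod p)) : Matrix (Fin 2) (Fin 2) (ZMod p))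
  map_one' := by simp; rfl
  map_mul' g h := by
    ext v
    simp [Matrix.mulVecLin_mul]

/-- The set `U = { [[1,b],[0,1]] : b ∈ 𝔽_p } ⊆ GL₂(𝔽_p)` of upper unitriangular matrices. -/
def uniSet (p : ℕ) [Fact p.Prime] : Set (GL (Fin 2) (ZMod p)) :=
  {u | ∃ b : ZMod p,
    ((u : GL (Fin 2) (ZMod p)) : Matrix (Fin 2) (Fin 2) (ZMod p)) = !![1, b; 0, 1]}

/-!
If `g` normalizes `U`, then `g [[1,1],[0,1]] = [[1,b],[0,1]] g` for some `b`, which forces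
`g₂₁ = 0`; an upper triangular `g = [[a,*],[0,d]]` then satisfies
`g [[1,d],[0,1]] = [[1,a],[0,1]] g`. For a cocycle `f`, the second coordinate of `f` on `U` is
additive in the parameter `b`, hence equal to `b y`, and evaluating `f` on both sides of this
relation gives `(a - d²) y = 0`. So if `a ≠ d²`, then `y = 0` and, after subtracting a
coboundary, `f` vanishes on `U`. As `p² ∤ |GL₂(𝔽_p)|`, the index `[G : U]` is prime to `p`, and
averaging `f` over `G ⧸ U` exhibits it as a coboundary, i.e. `H¹(G, V) = 0`.
-/

open Matrix Matrix.GeneralLinearGroup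

namespace Representation

variable {k G V : Type*} [CommRing k] [Group G] [AddCommGroup V] [Module k V]
  {ρ : Representation k G V} {f : G → V}

variable (ρ) in
def IsCocycle₁ (f : G → V) : Prop := ∀ g h : G, f (g * h) = f g + ρ g (f h)

namespace IsCocycle₁

theorem map_one (hf : IsCocycle₁ ρ f) : f 1 = 0 := by
  simpa using hf 1 1

theorem sub_coboundary (hf : IsCocycle₁ ρ f) (v : V) :
    IsCocycle₁ ρ fun g => f g - (ρ g v - v) := by
  intro g h
  simp only [hf g h, map_mul, Module.End.mul_apply, map_sub]
  abel

def zeroSubgroup (hf : IsCocycle₁ ρ f) : Subgroup G where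
  carrier := {g | f g = 0}
  one_mem' := hf.map_one
  mul_mem' {g h} hg hh := by simp_all [hf g h]
  inv_mem' {g} hg := by
    have h := hf g g⁻¹
    rw [mul_inv_cancel, hf.map_one, hg, zero_add] at h
    simpa using congrArg (ρ g⁻¹) h.symm

theorem map_mul_of_mem {H : Subgroup G} (hf : IsCocycle₁ ρ f) (hH : ∀ h ∈ H, f h = 0)
    (g : G) {h : G} (hh : h ∈ H) : f (g * h) = f g := by
  rw [hf, hH h hh, map_zero, add_zero]

theorem exists_coboundary_of_eq_zero_on {H : Subgroup G} [H.FiniteIndex]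
    (hf : IsCocycle₁ ρ f) (hH : ∀ h ∈ H, f h = 0) (hindex : IsUnit (H.index : k)) :
    ∃ v : V, ∀ g : G, f g = ρ g v - v := by
  have : Fintype (G ⧸ H) := Fintype.ofFinite _
  set s : V := ∑ q : G ⧸ H, f q.out
  have hsum (g : G) : (H.index : k) • f g = s - ρ g s := by
    have hperm : ∑ q : G ⧸ H, f (g * q.out) = s := by
      refine Fintype.sum_equiv (MulAction.toPerm g) _ _ fun q => ?_
      obtain ⟨h, hh⟩ := QuotientGroup.mk_out_eq_mul H (g * q.out)
      rw [MulAction.toPerm_apply, ← MulAction.Quotient.coe_smul_out, smul_eq_mul, hh,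
        hf.map_mul_of_mem hH _ h.2]
    have hexpand : ∑ q : G ⧸ H, f (g * q.out) = H.index • f g + ρ g s := by
      rw [Finset.sum_congr rfl fun q _ => hf g q.out, Finset.sum_add_distrib, Finset.sum_const,
        ← map_sum, Finset.card_univ, Subgroup.index_eq_card, Nat.card_eq_fintype_card]
    rw [Nat.cast_smul_eq_nsmul, eq_sub_iff_add_eq, ← hexpand, hperm]
  obtain ⟨n, hn⟩ := hindex
  refine ⟨-((↑n⁻¹ : k) • s), fun g => ?_⟩
  rw [map_neg, map_smul, neg_sub_neg, ← smul_sub, ← hsum, smul_smul, ← hn, Units.inv_mul,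
    one_smul]

end IsCocycle₁

end Representation

theorem Subgroup.not_dvd_index_of_card_eq {G : Type*} [Group G] {H : Subgroup G} {p : ℕ}
    (hH : Nat.card H = p) (hG : ¬ p ^ 2 ∣ Nat.card G) : ¬ p ∣ H.index := by
  rintro ⟨m, hm⟩
  exact hG ⟨m, by rw [← H.card_mul_index, hH, hm]; ring⟩

theorem Matrix.GeneralLinearGroup.lower_left_eq_zero_of_mul_upperRightHom {R : Type*}
    [CommRing R] {g : GL (Fin 2) R} {b : R} (h : g * upperRightHom 1 = upperRightHom b * g) :
    (g : Matrix (Fin 2) (Fin 2) R) 1 0 = 0 := by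
  simpa [Matrix.mul_apply, Fin.sum_univ_two] using
    congrArg (fun x : GL (Fin 2) R => (x : Matrix (Fin 2) (Fin 2) R) 1 1) h

theorem Matrix.GeneralLinearGroup.mul_upperRightHom_of_lower_left_eq_zero {R : Type*}
    [CommRing R] {g : GL (Fin 2) R} (hg : (g : Matrix (Fin 2) (Fin 2) R) 1 0 = 0) (b : R) :
    g * upperRightHom ((g : Matrix (Fin 2) (Fin 2) R) 1 1 * b) =
      upperRightHom ((g : Matrix (Fin 2) (Fin 2) R) 0 0 * b) * g := by
  ext i j
  fin_cases i <;> fin_cases j <;> simp [Matrix.mul_apply, Fin.sum_univ_two, hg]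
  ring

theorem not_sq_dvd_card_GL_fin_two (p : ℕ) [hp : Fact p.Prime] :
    ¬ p ^ 2 ∣ Nat.card (GL (Fin 2) (ZMod p)) := by
  set m := (p ^ 2 - 1) * (p - 1) with hm
  have hcard : Nat.card (GL (Fin 2) (ZMod p)) = p * m := by
    rw [card_GL_field, Fin.prod_univ_two, ZMod.card]
    simp only [Fin.val_zero, Fin.val_one, pow_zero, pow_one]
    rw [hm, sq, ← Nat.mul_sub_one]
    ring
  have hm_one : (m : ZMod p) = 1 := by
    have := hp.out.one_le
    push_cast [hm, Nat.one_le_pow 2 p this, this]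
    simp
  rw [hcard, pow_two, Nat.mul_dvd_mul_iff_left hp.out.pos, ← ZMod.natCast_eq_zero_iff, hm_one]
  exact one_ne_zero

theorem Matrix.GeneralLinearGroup.orderOf_upperRightHom_one (p : ℕ) [Fact p.Prime] :
    orderOf (upperRightHom (1 : ZMod p)) = p := by
  change orderOf (upperRightHom.toMonoidHom (Multiplicative.ofAdd 1)) = p
  rw [orderOf_injective _ (fun a b h => injective_upperRightHom (R := ZMod p)
    (a₁ := a.toAdd) (a₂ := b.toAdd) h), orderOf_ofAdd_eq_addOrderOf, ZMod.addOrderOf_one]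

theorem uniSet_eq_range (p : ℕ) [Fact p.Prime] : uniSet p = Set.range upperRightHom := by
  ext u
  simp [uniSet, Units.ext_iff, eq_comm]

section glRep

variable {p : ℕ} [Fact p.Prime] {G : Subgroup (GL (Fin 2) (ZMod p))}

theorem glRep_apply_one (h : G) (v : Fin 2 → ZMod p) :
    glRep p G h v 1 =
      ((h : GL (Fin 2) (ZMod p)) : Matrix (Fin 2) (Fin 2) (ZMod p)) 1 0 * v 0 +
        ((h : GL (Fin 2) (ZMod p)) : Matrix (Fin 2) (Fin 2) (ZMod p)) 1 1 * v 1 := by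
  simp [glRep, Matrix.mulVec, dotProduct, Fin.sum_univ_two]

theorem glRep_upperRightHom {b : ZMod p} (hb : upperRightHom b ∈ G) (v : Fin 2 → ZMod p) :
    glRep p G ⟨upperRightHom b, hb⟩ v = ![v 0 + b * v 1, v 1] := by
  ext i
  fin_cases i <;> simp [glRep, Matrix.mulVec, dotProduct, Fin.sum_univ_two]

variable (hU : ∀ b : ZMod p, upperRightHom b ∈ G) {f : G → Fin 2 → ZMod p}
include hU

theorem Representation.IsCocycle₁.glRep_upperRightHom_snd (hf : (glRep p G).IsCocycle₁ f)
    (b : ZMod p) :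
    f ⟨upperRightHom b, hU b⟩ 1 = b * f ⟨upperRightHom 1, hU 1⟩ 1 := by
  let φ : ZMod p →+ ZMod p :=
    { toFun b := f ⟨upperRightHom b, hU b⟩ 1
      map_zero' := by
        rw [show (⟨upperRightHom 0, hU 0⟩ : G) = 1 from Subtype.ext upperRightHom.map_zero_eq_one,
          hf.map_one]
        rfl
      map_add' b c := by
        have := congrFun (hf ⟨_, hU b⟩ ⟨_, hU c⟩) 1
        simpa [AddChar.map_add_eq_mul, glRep_apply_one] using this }
  have h := (φ.toZModLinearMap p).map_smul b 1
  rwa [smul_eq_mul, smul_eq_mul, mul_one] at h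

theorem Representation.IsCocycle₁.glRep_upperRightHom_one_snd_eq_zero
    (hf : (glRep p G).IsCocycle₁ f) {g : GL (Fin 2) (ZMod p)} (hg : g ∈ G)
    (hlow : (g : Matrix (Fin 2) (Fin 2) (ZMod p)) 1 0 = 0)
    (hne : (g : Matrix (Fin 2) (Fin 2) (ZMod p)) 0 0 ≠
      (g : Matrix (Fin 2) (Fin 2) (ZMod p)) 1 1 ^ 2) :
    f ⟨upperRightHom 1, hU 1⟩ 1 = 0 := by
  have hcomm := mul_upperRightHom_of_lower_left_eq_zero hlow 1
  have h := congrFun (congrArg f (Subtype.ext hcomm :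
    (⟨g, hg⟩ : G) * ⟨_, hU _⟩ = ⟨_, hU _⟩ * ⟨g, hg⟩)) 1
  rw [hf, hf, Pi.add_apply, Pi.add_apply, glRep_apply_one, glRep_apply_one,
    hf.glRep_upperRightHom_snd hU, hf.glRep_upperRightHom_snd hU (_ * 1)] at h
  set y := f ⟨upperRightHom 1, hU 1⟩ 1
  -- `h` now reads `f(g)₂ + d² y = a y + f(g)₂`, with `a = g₁₁` and `d = g₂₂`
  simp only [hlow, upperRightHom_apply, Matrix.of_apply, Matrix.cons_val', Matrix.cons_val_zero,
    Matrix.cons_val_one, Matrix.empty_val', Matrix.cons_val_fin_one] at h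
  have hy : ((g : Matrix (Fin 2) (Fin 2) (ZMod p)) 0 0 -
      (g : Matrix (Fin 2) (Fin 2) (ZMod p)) 1 1 ^ 2) * y = 0 := by
    linear_combination -h
  exact (mul_eq_zero.mp hy).resolve_left (sub_ne_zero.mpr hne)

theorem isUnit_index_zpowers_upperRightHom_one :
    IsUnit ((Subgroup.zpowers (⟨upperRightHom 1, hU 1⟩ : G)).index : ZMod p) := by
  have hcard : Nat.card (Subgroup.zpowers (⟨upperRightHom 1, hU 1⟩ : G)) = p := by
    rw [Nat.card_zpowers, Subgroup.orderOf_mk, orderOf_upperRightHom_one]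
  have hG : ¬ p ^ 2 ∣ Nat.card G := fun h =>
    not_sq_dvd_card_GL_fin_two p (h.trans G.card_subgroup_dvd_card)
  exact isUnit_iff_ne_zero.mpr fun h =>
    Subgroup.not_dvd_index_of_card_eq hcard hG ((ZMod.natCast_eq_zero_iff _ _).mp h)

theorem h1Trivial_glRep_of_mem_of_ne_sq {g : GL (Fin 2) (ZMod p)} (hg : g ∈ G)
    (hlow : (g : Matrix (Fin 2) (Fin 2) (ZMod p)) 1 0 = 0)
    (hne : (g : Matrix (Fin 2) (Fin 2) (ZMod p)) 0 0 ≠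
      (g : Matrix (Fin 2) (Fin 2) (ZMod p)) 1 1 ^ 2) :
    H1Trivial (glRep p G) := by
  intro f (hf : (glRep p G).IsCocycle₁ f)
  set v : Fin 2 → ZMod p := ![0, f ⟨upperRightHom 1, hU 1⟩ 0]
  have hf' := hf.sub_coboundary v
  have hσ : f ⟨upperRightHom 1, hU 1⟩ - (glRep p G ⟨upperRightHom 1, hU 1⟩ v - v) = 0 := by
    have hy := hf.glRep_upperRightHom_one_snd_eq_zero hU hg hlow hne
    rw [glRep_upperRightHom]
    ext i
    fin_cases i <;> simp [v, hy, -upperRightHom_apply]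
  have hzpowers : Subgroup.zpowers _ ≤ hf'.zeroSubgroup := Subgroup.zpowers_le.mpr hσ
  obtain ⟨w, hw⟩ := hf'.exists_coboundary_of_eq_zero_on (fun _ h => hzpowers h)
    (isUnit_index_zpowers_upperRightHom_one hU)
  refine ⟨w + v, fun g => ?_⟩
  rw [map_add, sub_eq_iff_eq_add.mp (hw g)]
  abel

end glRep

/-- Let `p` be a prime and `G ⊆ GL₂(𝔽_p)` a subgroup containing the group
`U = { [[1,b],[0,1]] : b ∈ 𝔽_p }` of upper unitriangular matrices, and let `V = 𝔽_p²` with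
the natural `G`-action.  If `H¹(G,V) ≠ 0`, then every `g ∈ G` that normalizes `U`
(i.e. `gUg⁻¹ = U`) is upper triangular (its `(2,1)`-entry is `0`) and its diagonal entries
satisfy `g₁₁ = (g₂₂)²`. -/
theorem normalizer_shape_of_H1_ne_zero (p : ℕ) [Fact p.Prime]
    (G : Subgroup (GL (Fin 2) (ZMod p)))
    (hU : uniSet p ⊆ (G : Set (GL (Fin 2) (ZMod p))))
    (h1 : ¬ H1Trivial (glRep p G)) :
    ∀ g ∈ G, ((fun u => g * u * g⁻¹) '' uniSet p = uniSet p) →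
      ((g : Matrix (Fin 2) (Fin 2) (ZMod p)) 1 0 = 0 ∧
        (g : Matrix (Fin 2) (Fin 2) (ZMod p)) 0 0 =
          ((g : Matrix (Fin 2) (Fin 2) (ZMod p)) 1 1) ^ 2) := by
  rw [uniSet_eq_range] at hU
  intro g hg hnorm
  rw [uniSet_eq_range] at hnorm
  obtain ⟨b, hb⟩ : g * upperRightHom 1 * g⁻¹ ∈ Set.range upperRightHom :=
    hnorm ▸ ⟨_, ⟨1, rfl⟩, rfl⟩
  have hlow := lower_left_eq_zero_of_mul_upperRightHom (g := g) (b := b) (by rw [hb]; group)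
  refine ⟨hlow, ?_⟩
  by_contra hne
  exact h1 (h1Trivial_glRep_of_mem_of_ne_sq (fun b => hU ⟨b, rfl⟩) hg hlow hne)
end

section
/- Let p be a prime, V a 2-dimensional vector space over 𝔽_p, and G ⊆ GL(V) a subgroup isomorphic, as an abstract group, to the symmetric group S₃. Then some simple 𝔽_p[G]-module is a common irreducible factor of V and End(V). -/
/-- A representation `ρ.asModule` is an `AddCommGroup` whenever `V` is. -/
noncomputable instance Representation.asModuleAddCommGroup {k G V : Type*} [CommRing k]
    [Group G] [AddCommGroup V] [Module k V] (ρ : Representation k G V) :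
    AddCommGroup ρ.asModule :=
  inferInstanceAs <| AddCommGroup V

/-- The conjugation representation of `G` on `End(V)`: `g • φ = ρ g ∘ φ ∘ ρ g⁻¹`. -/
def Representation.conjEnd {k G V : Type*} [CommRing k] [Group G] [AddCommGroup V]
    [Module k V] (ρ : Representation k G V) : Representation k G (V →ₗ[k] V) where
  toFun g :=
    { toFun := fun φ => ρ g ∘ₗ φ ∘ₗ ρ g⁻¹
      map_add' := fun φ ψ => by simp only [LinearMap.add_comp, LinearMap.comp_add]
      map_smul' := fun c φ => by
        simp only [LinearMap.smul_comp, LinearMap.comp_smul, RingHom.id_apply] }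
  map_one' := by ext φ v; simp
  map_mul' g h := by
    ext φ v
    simp [mul_inv_rev, map_mul, Module.End.mul_apply]

/-- Two `R`-modules have a common irreducible factor if some simple `R`-module is isomorphic
both to a subquotient (a quotient of a submodule) of the first and to a subquotient of the
second. -/
def HasCommonIrreducibleFactor (R V W : Type*) [Ring R] [AddCommGroup V] [Module R V]
    [AddCommGroup W] [Module R W] : Prop :=
  ∃ (A : Submodule R V) (B : Submodule R A) (A' : Submodule R W) (B' : Submodule R A'),
    IsSimpleModule R (A ⧸ B) ∧ Nonempty ((A ⧸ B) ≃ₗ[R] (A' ⧸ B'))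

/-- The tautological representation of a subgroup `G ⊆ GL(V)` on `V`. -/
def tautRep (p : ℕ) (V : Type) [AddCommGroup V] [Module (ZMod p) V]
    (G : Subgroup (V ≃ₗ[ZMod p] V)) : Representation (ZMod p) G V where
  toFun g := ((g : V ≃ₗ[ZMod p] V) : V →ₗ[ZMod p] V)
  map_one' := by ext v; rfl
  map_mul' g h := by ext v; rfl

/-!
Let `c` be a `3`-cycle and `t` a transposition of `G ≅ S₃`, so `c³ = t² = 1` and `ct = tc²`.

If `c` fixes no nonzero vector, then `1 + c + c² = 0` on `V`, and `c`, `t` have no common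
eigenvector, so `V` is irreducible. A vector `e₀ ≠ 0` fixed by `t` gives a basis `e₀, c e₀`,
and `e₀ ↦ t`, `c e₀ ↦ tc` extends to a nonzero, hence injective, equivariant map `V → End(V)`.

If `c` fixes a line, that line is `G`-stable, and writing `c` and `t` as triangular matrices the
relations force `G` to act trivially on the line or on the quotient. So the trivial module is a
subquotient of `V`; it is also one of `End(V)`, as the scalars.
-/

open Module

section Subquotient

variable (R S M : Type*) [Ring R] [AddCommGroup S] [Module R S] [AddCommGroup M] [Module R M]

def IsSubquotient : Prop :=
  ∃ (A : Submodule R M) (B : Submodule R A), Nonempty ((A ⧸ B) ≃ₗ[R] S)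

variable {R S M}

theorem IsSubquotient.of_injective {f : S →ₗ[R] M} (hf : Function.Injective f) :
    IsSubquotient R S M :=
  ⟨LinearMap.range f, ⊥,
    ⟨(Submodule.quotEquivOfEqBot ⊥ rfl).trans (LinearEquiv.ofInjective f hf).symm⟩⟩

theorem IsSubquotient.refl : IsSubquotient R M M :=
  .of_injective (f := LinearMap.id) Function.injective_id

theorem IsSubquotient.of_surjective {f : M →ₗ[R] S} (hf : Function.Surjective f) :
    IsSubquotient R S M := by
  have hsurj : Function.Surjective (f ∘ₗ (⊤ : Submodule R M).subtype) := fun s ↦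
    let ⟨m, hm⟩ := hf s; ⟨⟨m, trivial⟩, hm⟩
  exact ⟨⊤, LinearMap.ker _, ⟨LinearMap.quotKerEquivOfSurjective _ hsurj⟩⟩

theorem HasCommonIrreducibleFactor.of_isSubquotient {N : Type*} [AddCommGroup N] [Module R N]
    [IsSimpleModule R S] (hM : IsSubquotient R S M) (hN : IsSubquotient R S N) :
    HasCommonIrreducibleFactor R M N := by
  obtain ⟨A, B, ⟨e⟩⟩ := hM
  obtain ⟨A', B', ⟨e'⟩⟩ := hN
  exact ⟨A, B, A', B', IsSimpleModule.congr e, ⟨e.trans e'.symm⟩⟩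

end Subquotient

namespace Module.End

variable {R M : Type*} [Ring R] [AddCommGroup M] [Module R M]

theorem exists_apply_eq_self_of_sq_eq_one {T : Module.End R M} (hT : T ^ 2 = 1)
    (hT' : T ≠ -1) : ∃ v ≠ 0, T v = v := by
  obtain ⟨w, hw⟩ : ∃ w, T w ≠ -w := by
    by_contra! h
    exact hT' (LinearMap.ext h)
  refine ⟨T w + w, by rwa [ne_eq, add_eq_zero_iff_eq_neg], ?_⟩
  rw [map_add, ← Module.End.mul_apply, ← sq, hT, Module.End.one_apply, add_comm]

theorem sq_add_self_add_one_eq_zero {C : Module.End R M} (hC : C ^ 3 = 1)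
    (hfix : ∀ v, C v = v → v = 0) : C ^ 2 + C + 1 = 0 := by
  have h : C * (C ^ 2 + C + 1) = C ^ 2 + C + 1 := by
    rw [mul_add, mul_add, mul_one, ← pow_succ', hC, ← sq]
    abel
  exact LinearMap.ext fun v ↦ hfix _ congr($h v)

end Module.End

open Matrix in
/-- In a basis whose first vector is fixed by `A`, the line it spans is `B`-stable, and `B` acts
trivially on that line or on the quotient. -/
theorem Matrix.fin_two_dihedral {K : Type*} [Field K] {A B : Matrix (Fin 2) (Fin 2) K}
    (hA₀₀ : A 0 0 = 1) (hA₁₀ : A 1 0 = 0) (hA : A ^ 3 = 1) (hB : B ^ 2 = 1)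
    (hAB : A * B = B * A ^ 2) (hA₁ : A ≠ 1) :
    B 1 0 = 0 ∧ (B 0 0 = 1 ∨ A 1 1 = 1 ∧ B 1 1 = 1) := by
  have hA₁₁ := congrFun₂ hA 1 1
  have hB₀₀ := congrFun₂ hB 0 0
  have hB₁₁ := congrFun₂ hB 1 1
  have hAB₀₀ := congrFun₂ hAB 0 0
  have hAB₀₁ := congrFun₂ hAB 0 1
  have hAB₁₀ := congrFun₂ hAB 1 0
  have hAB₁₁ := congrFun₂ hAB 1 1
  simp only [pow_succ, pow_zero, one_mul, mul_apply, Fin.sum_univ_two, hA₀₀, hA₁₀, zero_mul,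
    zero_add, mul_zero, one_apply_eq, mul_one, add_zero, add_eq_left, mul_eq_zero]
    at hA₁₁ hB₀₀ hB₁₁ hAB₀₀ hAB₀₁ hAB₁₀ hAB₁₁
  have hA₁' : A 0 1 = 0 → A 1 1 ≠ 1 := by
    contrapose! hA₁
    ext i j; fin_cases i <;> fin_cases j <;> simp [hA₀₀, hA₁₀, hA₁]
  have hB₁₀ : B 1 0 = 0 := by
    by_cases h : A 1 1 = 1
    · exact hAB₀₀.resolve_left fun h' ↦ hA₁' h' h
    · have : (A 1 1 - 1) * B 1 0 = 0 := by linear_combination hAB₁₀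
      exact (mul_eq_zero.1 this).resolve_left (sub_ne_zero.2 h)
  rw [hB₁₀] at hB₀₀ hB₁₁ hAB₁₁
  have hA₁₁_eq : A 1 1 = 1 := by
    have : B 1 1 * A 1 1 * (A 1 1 - 1) = 0 := by linear_combination -hAB₁₁
    have hB₁₁₀ : B 1 1 ≠ 0 := by rintro h; simp [h] at hB₁₁
    have hA₁₁₀ : A 1 1 ≠ 0 := by rintro h; simp [h] at hA₁₁
    simpa [hB₁₁₀, hA₁₁₀, sub_eq_zero] using this
  have hB₁₁_eq : B 1 1 = 2 * B 0 0 := by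
    have : A 0 1 * (B 1 1 - 2 * B 0 0) = 0 := by
      rw [hA₁₁_eq] at hAB₀₁
      linear_combination hAB₀₁
    exact sub_eq_zero.1 ((mul_eq_zero.1 this).resolve_left fun h ↦ hA₁' h hA₁₁_eq)
  refine ⟨hB₁₀, ?_⟩
  rcases mul_self_eq_one_iff.1 (by simpa using hB₀₀) with hB₀₀_eq | hB₀₀_eq
  · exact Or.inl hB₀₀_eq
  · -- `B 1 1 = -2` squares to `1`, so `3 = 0` and `B 1 1 = 1`.
    rw [hB₀₀_eq] at hB₁₁_eq
    exact Or.inr ⟨hA₁₁_eq, by linear_combination -hB₁₁ + (B 1 1 - 1) * hB₁₁_eq⟩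

open Equiv in
theorem exists_dihedral_generators {G : Type*} [Group G] (e : G ≃* Perm (Fin 3)) :
    ∃ c t : G, c ^ 3 = 1 ∧ t ^ 2 = 1 ∧ c * t = t * c ^ 2 ∧ c ≠ 1 ∧
      Subgroup.closure {c, t} = ⊤ := by
  have hgen : Subgroup.closure {finRotate 3, swap 0 (finRotate 3 0)} = ⊤ :=
    Perm.closure_cycle_adjacent_swap isCycle_finRotate support_finRotate 0
  refine ⟨e.symm (finRotate 3), e.symm (swap 0 (finRotate 3 0)), ?_, ?_, ?_, ?_, ?_⟩
  · rw [← map_pow, show finRotate 3 ^ 3 = 1 by decide, map_one]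
  · rw [← map_pow, show swap (0 : Fin 3) (finRotate 3 0) ^ 2 = 1 by decide, map_one]
  · simp only [← map_pow, ← map_mul]
    congr 1
    decide
  · simp only [ne_eq, MulEquiv.map_eq_one_iff]
    decide
  · have := MonoidHom.map_closure (e.symm : Perm (Fin 3) →* G)
      {finRotate 3, swap 0 (finRotate 3 0)}
    rw [hgen, Subgroup.map_top_of_surjective _ e.symm.surjective, Set.image_pair] at this
    exact this.symm

namespace Representation

open scoped MonoidAlgebra

variable {k G V W : Type*} [Field k] [Group G] [AddCommGroup V] [Module k V]
  [AddCommGroup W] [Module k W] {ρ : Representation k G V} {σ : Representation k G W}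

theorem conjEnd_apply (g : G) (φ : V →ₗ[k] V) : ρ.conjEnd g φ = ρ g * φ * ρ g⁻¹ := rfl

theorem isIntertwining_of_closure_eq_top {s : Set G} (hs : Subgroup.closure s = ⊤)
    {f : V →ₗ[k] W} (hf : ∀ g ∈ s, ∀ v, f (ρ g v) = σ g (f v)) (g : G) (v : V) :
    f (ρ g v) = σ g (f v) := by
  have hg : g ∈ Subgroup.closure s := hs ▸ Subgroup.mem_top g
  induction hg using Subgroup.closure_induction generalizing v with
  | mem g hg => exact hf g hg v
  | one => simp
  | mul g h _ _ hg hh => simp [Module.End.mul_apply, hg, hh]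
  | inv g _ hg => rw [← σ.inv_self_apply g (f _), ← hg, self_inv_apply]

theorem IntertwiningMap.isSubquotient_of_injective (f : IntertwiningMap ρ σ)
    (hf : Function.Injective f) : IsSubquotient k[G] ρ.asModule σ.asModule :=
  .of_injective (f := equivLinearMapAsModule ρ σ f) hf

theorem IntertwiningMap.isSubquotient_of_surjective (f : IntertwiningMap ρ σ)
    (hf : Function.Surjective f) : IsSubquotient k[G] σ.asModule ρ.asModule :=
  .of_surjective (f := equivLinearMapAsModule ρ σ f) hf

instance isIrreducible_trivial : IsIrreducible (trivial k G k) := by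
  rw [irreducible_iff_isSimpleModule_asModule, isSimpleModule_iff]
  exact is_simple_module_of_finrank_eq_one
    ((trivial k G k).asModuleEquiv.finrank_eq.trans (finrank_self k))

theorem isSubquotient_trivial_of_apply_eq_self {s : Set G} (hs : Subgroup.closure s = ⊤)
    {e₀ : V} (he₀ : e₀ ≠ 0) (h : ∀ g ∈ s, ρ g e₀ = e₀) :
    IsSubquotient k[G] (trivial k G k).asModule ρ.asModule :=
  IntertwiningMap.isSubquotient_of_injective
    ((LinearMap.toSpanSingleton k V e₀).intertwiningMap_of_isIntertwiningMap _ _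
      (isIntertwining_of_closure_eq_top hs fun g hg a ↦ by simp [h g hg]))
    (LinearMap.ker_eq_bot.1 (LinearMap.ker_toSpanSingleton k he₀))

theorem isSubquotient_trivial_of_comp_eq_self {s : Set G} (hs : Subgroup.closure s = ⊤)
    {μ : V →ₗ[k] k} (hμ : μ ≠ 0) (h : ∀ g ∈ s, ∀ v, μ (ρ g v) = μ v) :
    IsSubquotient k[G] (trivial k G k).asModule ρ.asModule :=
  IntertwiningMap.isSubquotient_of_surjective
    (μ.intertwiningMap_of_isIntertwiningMap _ (trivial k G k)
      (isIntertwining_of_closure_eq_top hs fun g hg v ↦ by simp [h g hg]))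
    (LinearMap.range_eq_top.1 (Module.Dual.range_eq_top_of_ne_zero hμ))

theorem hasCommonIrreducibleFactor_conjEnd_of_isSubquotient_trivial [Nontrivial V]
    (h : IsSubquotient k[G] (trivial k G k).asModule ρ.asModule) :
    HasCommonIrreducibleFactor k[G] ρ.asModule ρ.conjEnd.asModule := by
  refine .of_isSubquotient h (IntertwiningMap.isSubquotient_of_injective
    ((LinearMap.toSpanSingleton k _ 1).intertwiningMap_of_isIntertwiningMap _ ρ.conjEnd
      fun g a ↦ ?_) (LinearMap.ker_eq_bot.1 (LinearMap.ker_toSpanSingleton k one_ne_zero)))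
  simp [conjEnd_apply, ← map_mul]

theorem isIrreducible_of_finrank_eq_two (hV : finrank k V = 2)
    (h : ∀ v ≠ 0, ∃ g, ρ g v ∉ k ∙ v) : IsIrreducible ρ := by
  have : FiniteDimensional k V := .of_finrank_pos (by omega)
  refine { exists_pair_ne := ⟨⊥, ⊤, fun h ↦ ?_⟩, eq_bot_or_eq_top := fun W ↦ ?_ }
  · have : Nontrivial V := Module.nontrivial_of_finrank_pos (R := k) (by omega)
    obtain ⟨v, hv⟩ := exists_ne (0 : V)
    have hv' : v ∈ (⊤ : Subrepresentation ρ).toSubmodule := Submodule.mem_top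
    rw [← h] at hv'
    exact hv hv'
  · rw [or_iff_not_imp_left]
    intro hW
    by_contra hW'
    obtain ⟨v, hvW, hv⟩ := Submodule.exists_mem_ne_zero_of_ne_bot
      fun h' ↦ hW (Subrepresentation.toSubmodule_injective h')
    have hle : k ∙ v ≤ W.toSubmodule := (Submodule.span_singleton_le_iff_mem _ _).2 hvW
    have hlt := Submodule.finrank_lt fun h' ↦ hW' (Subrepresentation.toSubmodule_injective h')
    have hspan : k ∙ v = W.toSubmodule := Submodule.eq_of_le_of_finrank_eq hle <| by
      have := Submodule.finrank_mono hle
      rw [finrank_span_singleton hv] at this ⊢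
      omega
    obtain ⟨g, hg⟩ := h v hv
    exact hg (hspan ▸ W.apply_mem_toSubmodule g hvW)

section Dihedral

variable {c t : G}

theorem apply_mul_apply_eq_of_mul_eq (hct : c * t = t * c ^ 2) : ρ c * ρ t = ρ t * ρ c ^ 2 := by
  rw [← map_mul, hct, map_mul, map_pow]

theorem apply_notMem_span_singleton_of_dihedral (hct : c * t = t * c ^ 2)
    (hfix : ∀ v, ρ c v = v → v = 0) {v : V} (hv : v ≠ 0) (hcv : ρ c v ∈ k ∙ v) :
    ρ t v ∉ k ∙ v := by
  obtain ⟨l, hl⟩ := Submodule.mem_span_singleton.1 hcv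
  intro htv
  obtain ⟨m, hm⟩ := Submodule.mem_span_singleton.1 htv
  have hmul : (m * l) • v = (m * l ^ 2) • v := calc
    (m * l) • v = (ρ c * ρ t) v := by
      rw [Module.End.mul_apply, ← hm, map_smul, ← hl, smul_smul]
    _ = (ρ t * ρ c ^ 2) v := by rw [apply_mul_apply_eq_of_mul_eq hct]
    _ = (m * l ^ 2) • v := by
      rw [Module.End.mul_apply, sq, Module.End.mul_apply, ← hl, map_smul, ← hl, smul_smul,
        map_smul, ← hm, smul_smul]
      ring_nf
  have hm₀ : m ≠ 0 := by
    rintro rfl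
    exact hv ((ρ.apply_bijective t).injective (by rw [← hm, zero_smul, map_zero]))
  have hl₀ : l ≠ 0 := by
    rintro rfl
    exact hv ((ρ.apply_bijective c).injective (by rw [← hl, zero_smul, map_zero]))
  have hl₁ : l = 1 := by
    have : m * l * (l - 1) = 0 := by linear_combination -smul_left_injective k hv hmul
    exact sub_eq_zero.1 ((mul_eq_zero.1 this).resolve_left (mul_ne_zero hm₀ hl₀))
  exact hv (hfix v (by rw [← hl, hl₁, one_smul]))

theorem isIrreducible_of_dihedral (hV : finrank k V = 2) (hct : c * t = t * c ^ 2)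
    (hfix : ∀ v, ρ c v = v → v = 0) : IsIrreducible ρ :=
  isIrreducible_of_finrank_eq_two hV fun v hv ↦ by
    by_cases hcv : ρ c v ∈ k ∙ v
    · exact ⟨t, apply_notMem_span_singleton_of_dihedral hct hfix hv hcv⟩
    · exact ⟨c, hcv⟩

theorem apply_ne_neg_one_of_dihedral (hc : c ^ 3 = 1) (hct : c * t = t * c ^ 2)
    (hρc : ρ c ≠ 1) : ρ t ≠ -1 := by
  intro ht
  have h₂ : ρ c = ρ c ^ 2 := by simpa [ht] using apply_mul_apply_eq_of_mul_eq (ρ := ρ) hct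
  have h₃ : ρ c ^ 3 = 1 := by rw [← map_pow, hc, map_one]
  rw [pow_succ, ← h₂, ← sq, ← h₂] at h₃
  exact hρc h₃

theorem exists_apply_eq_self_linearIndependent_of_dihedral (hc : c ^ 3 = 1)
    (ht : t ^ 2 = 1) (hct : c * t = t * c ^ 2) (hρc : ρ c ≠ 1)
    (hfix : ∀ v, ρ c v = v → v = 0) : ∃ e₀, ρ t e₀ = e₀ ∧ LinearIndependent k ![e₀, ρ c e₀] := by
  obtain ⟨e₀, he₀, hte₀⟩ := Module.End.exists_apply_eq_self_of_sq_eq_one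
    (by rw [← map_pow, ht, map_one]) (apply_ne_neg_one_of_dihedral hc hct hρc)
  refine ⟨e₀, hte₀, (LinearIndependent.pair_iff' he₀).2 fun a ha ↦ ?_⟩
  refine apply_notMem_span_singleton_of_dihedral hct hfix he₀
    (Submodule.mem_span_singleton.2 ⟨a, ha⟩) ?_
  rw [hte₀]
  exact Submodule.mem_span_singleton_self e₀

theorem exists_intertwiningMap_conjEnd_ne_zero (hV : finrank k V = 2) (hc : c ^ 3 = 1)
    (ht : t ^ 2 = 1) (hct : c * t = t * c ^ 2) (hgen : Subgroup.closure {c, t} = ⊤)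
    (hfix : ∀ v, ρ c v = v → v = 0) {e₀ : V} (hTe₀ : ρ t e₀ = e₀)
    (hli : LinearIndependent k ![e₀, ρ c e₀]) : ∃ Φ : IntertwiningMap ρ ρ.conjEnd, Φ ≠ 0 := by
  set C := ρ c
  set T := ρ t
  have hC₃ : C ^ 3 = 1 := by rw [← map_pow, hc, map_one]
  have hT₂ : T ^ 2 = 1 := by rw [← map_pow, ht, map_one]
  have hCT : C * T = T * C ^ 2 := apply_mul_apply_eq_of_mul_eq hct
  have hC₂ : C ^ 2 = -C - 1 := sub_eq_zero.1 <| (by abel : C ^ 2 - (-C - 1) = C ^ 2 + C + 1).trans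
    (Module.End.sq_add_self_add_one_eq_zero hC₃ hfix)
  have hTCT : T * C * T = C ^ 2 := by rw [mul_assoc, hCT, ← mul_assoc, ← sq, hT₂, one_mul]
  have hc_inv : ρ c⁻¹ = C ^ 2 := by
    rw [inv_eq_of_mul_eq_one_right (by rw [← pow_succ', hc]), map_pow]
  have ht_inv : ρ t⁻¹ = T := by
    rw [inv_eq_of_mul_eq_one_right (by rw [← sq, ht])]
  let b := basisOfLinearIndependentOfCardEqFinrank hli (by simp [hV])
  have hb : ⇑b = ![e₀, C e₀] := coe_basisOfLinearIndependentOfCardEqFinrank hli _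
  have hb₀ : b 0 = e₀ := by simp [hb]
  have hb₁ : b 1 = C e₀ := by simp [hb]
  -- `Φ` sends `ρ g e₀` to `ρ (g t g⁻¹)`.
  let Φ : V →ₗ[k] Module.End k V := b.constr k ![T, T * C]
  have hΦ₀ : Φ e₀ = T := by
    rw [← hb₀]
    exact b.constr_basis k _ 0
  have hΦ₁ : Φ (C e₀) = T * C := by
    rw [← hb₁]
    exact b.constr_basis k _ 1
  have hΦ₂ : Φ (C (C e₀)) = -(T * C) - T := by
    rw [← Module.End.mul_apply, ← sq, hC₂, LinearMap.sub_apply, LinearMap.neg_apply,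
      Module.End.one_apply, map_sub, map_neg, hΦ₀, hΦ₁]
  have hΦc₀ : Φ (C e₀) = C * Φ e₀ * C ^ 2 := by
    rw [hΦ₀, hΦ₁, hCT, mul_assoc, ← pow_add, show 2 + 2 = 3 + 1 from rfl, pow_succ, hC₃, one_mul]
  have hΦc₁ : Φ (C (C e₀)) = C * Φ (C e₀) * C ^ 2 := by
    rw [hΦ₁, hΦ₂, mul_assoc C, mul_assoc T, ← pow_succ', hC₃, mul_one, hCT, hC₂]
    noncomm_ring
  have hΦt₀ : Φ (T e₀) = T * Φ e₀ * T := by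
    rw [hTe₀, hΦ₀, ← sq, hT₂, one_mul]
  have hΦt₁ : Φ (T (C e₀)) = T * Φ (C e₀) * T := by
    conv_lhs => rw [← hTe₀, ← Module.End.mul_apply, ← Module.End.mul_apply, hTCT, sq]
    rw [Module.End.mul_apply, hΦ₂, hΦ₁, ← mul_assoc, ← sq, hT₂, one_mul, hCT, hC₂]
    noncomm_ring
  have hequiv : ∀ g ∈ ({c, t} : Set G), ∀ v, Φ (ρ g v) = ρ.conjEnd g (Φ v) := by
    have on_basis (g : G) (h : ∀ i, Φ (ρ g (b i)) = ρ.conjEnd g (Φ (b i))) (v : V) :=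
      LinearMap.congr_fun (f := Φ ∘ₗ ρ g) (g := ρ.conjEnd g ∘ₗ Φ) (b.ext h) v
    simp only [Set.mem_insert_iff, Set.mem_singleton_iff, forall_eq_or_imp, forall_eq]
    refine ⟨on_basis c (Fin.forall_fin_two.2 ⟨?_, ?_⟩),
      on_basis t (Fin.forall_fin_two.2 ⟨?_, ?_⟩)⟩ <;>
      simp only [conjEnd_apply, hb₀, hb₁, hc_inv, ht_inv]
    exacts [hΦc₀, hΦc₁, hΦt₀, hΦt₁]
  refine ⟨Φ.intertwiningMap_of_isIntertwiningMap ρ ρ.conjEnd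
    (isIntertwining_of_closure_eq_top hgen hequiv), fun h ↦ hli.ne_zero 0 ?_⟩
  have hT : T = 0 := by rw [← hΦ₀]; exact congr($h e₀)
  rw [Matrix.cons_val_zero, ← hTe₀, hT, LinearMap.zero_apply]

theorem isSubquotient_trivial_of_dihedral (hV : finrank k V = 2) (hc : c ^ 3 = 1)
    (ht : t ^ 2 = 1) (hct : c * t = t * c ^ 2) (hgen : Subgroup.closure {c, t} = ⊤)
    (hρc : ρ c ≠ 1) {e₀ : V} (he₀ : e₀ ≠ 0) (hce₀ : ρ c e₀ = e₀) :
    IsSubquotient k[G] (trivial k G k).asModule ρ.asModule := by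
  obtain ⟨f₀, hf₀⟩ := exists_linearIndependent_pair_of_one_lt_finrank (R := k) (by omega) he₀
  let b := basisOfLinearIndependentOfCardEqFinrank hf₀ (by simp [hV])
  have hb : ⇑b = ![e₀, f₀] := coe_basisOfLinearIndependentOfCardEqFinrank hf₀ _
  have hcb₀ : ρ c (b 0) = b 0 := by simp [hb, hce₀]
  let M := LinearMap.toMatrixAlgEquiv b
  have hM (g : G) (i j : Fin 2) : M (ρ g) i j = b.repr (ρ g (b j)) i :=
    LinearMap.toMatrixAlgEquiv_apply b _ i j
  have hA₀₀ : M (ρ c) 0 0 = 1 := by simp [hM, hcb₀]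
  have hA₁₀ : M (ρ c) 1 0 = 0 := by simp [hM, hcb₀]
  obtain ⟨hB₁₀, hB₀₀ | ⟨hA₁₁, hB₁₁⟩⟩ := Matrix.fin_two_dihedral (B := M (ρ t)) hA₀₀ hA₁₀
    (by rw [← map_pow, ← map_pow, hc, map_one, map_one])
    (by rw [← map_pow, ← map_pow, ht, map_one, map_one])
    (by rw [← map_pow, ← map_mul, apply_mul_apply_eq_of_mul_eq hct, map_mul])
    (by rw [Ne, ← map_one M, M.injective.eq_iff]; exact hρc)
  · refine isSubquotient_trivial_of_apply_eq_self hgen he₀ ?_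
    rintro g (rfl | rfl)
    · exact hce₀
    · rw [show e₀ = b 0 by simp [hb]]
      refine b.ext_elem fun i ↦ ?_
      fin_cases i <;> simp [← hM, hB₀₀, hB₁₀]
  · refine isSubquotient_trivial_of_comp_eq_self hgen (μ := b.coord 1)
      (fun h ↦ by simpa using congr($h (b 1))) ?_
    rintro g (rfl | rfl) v <;> refine LinearMap.congr_fun (f := b.coord 1 ∘ₗ ρ g)
      (b.ext fun j ↦ ?_) v <;> fin_cases j <;> simp [← hM, hA₁₀, hA₁₁, hB₁₀, hB₁₁]

theorem hasCommonIrreducibleFactor_conjEnd_of_dihedral (hV : finrank k V = 2) (hc : c ^ 3 = 1)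
    (ht : t ^ 2 = 1) (hct : c * t = t * c ^ 2) (hgen : Subgroup.closure {c, t} = ⊤)
    (hρc : ρ c ≠ 1) : HasCommonIrreducibleFactor k[G] ρ.asModule ρ.conjEnd.asModule := by
  have : Nontrivial V := Module.nontrivial_of_finrank_pos (R := k) (by omega)
  by_cases hfix : ∀ v, ρ c v = v → v = 0
  · have := isIrreducible_of_dihedral hV hct hfix
    obtain ⟨e₀, hte₀, hli⟩ := exists_apply_eq_self_linearIndependent_of_dihedral hc ht hct hρc hfix
    obtain ⟨Φ, hΦ⟩ := exists_intertwiningMap_conjEnd_ne_zero hV hc ht hct hgen hfix hte₀ hli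
    exact .of_isSubquotient .refl
      (Φ.isSubquotient_of_injective ((IsIrreducible.injective_or_eq_zero Φ).resolve_right hΦ))
  · push Not at hfix
    obtain ⟨e₀, hce₀, he₀⟩ := hfix
    exact hasCommonIrreducibleFactor_conjEnd_of_isSubquotient_trivial
      (isSubquotient_trivial_of_dihedral hV hc ht hct hgen hρc he₀ hce₀)

end Dihedral

end Representation

/-- Let `p` be a prime, `V` a `2`-dimensional vector space over `𝔽_p`, and
`G ⊆ GL(V)` a subgroup isomorphic, as an abstract group, to the symmetric group `S₃`.  Then
some simple `𝔽_p[G]`-module is a common irreducible factor of `V` and `End(V)` (the latter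
with the conjugation action). -/
theorem hasCommonIrreducibleFactor_of_S3 (p : ℕ) [Fact p.Prime]
    (V : Type) [AddCommGroup V] [Module (ZMod p) V]
    (hdim : Module.finrank (ZMod p) V = 2)
    (G : Subgroup (V ≃ₗ[ZMod p] V)) (hG : Nonempty (G ≃* Equiv.Perm (Fin 3))) :
    HasCommonIrreducibleFactor (MonoidAlgebra (ZMod p) G)
      (tautRep p V G).asModule ((tautRep p V G).conjEnd).asModule := by
  obtain ⟨e⟩ := hG
  obtain ⟨c, t, hc, ht, hct, hc₁, hgen⟩ := exists_dihedral_generators e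
  exact Representation.hasCommonIrreducibleFactor_conjEnd_of_dihedral hdim hc ht hct hgen
    fun h ↦ hc₁ (Subtype.ext (LinearEquiv.ext fun v ↦ congr($h v)))
end
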